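/- Let I = I(X) be the vanishing ideal of a finite set X of points in P^{s−1}, let ≺ be a graded monomial order, let f ∈ F_{≺,d}, and write in_≺(f) = t_1^{a_1} ⋯ t_s^{a_s}. If in_≺(I) is generated by t_2^{d_2},…,t_s^{d_s}, then there is r ≥ 2 such that a_r ≥ 1, a_i ≤ d_i − 1 for i ≥ r, a_i = 0 for 2 ≤ i < r, and |V_X(f)| ≤ d_2 ⋯ d_s − (d_2 − a_2) ⋯ (d_s − a_s). -/

import Mathlib

open MvPolynomial Finsupp Filter

namespace MDF

open scoped Classical

variable (K : Type*) [Field K] (s : ℕ)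

/-- The Hilbert function of `S/I` in degree `d`: `dim_K (S_d / I_d)`. -/
noncomputable def hilbertFn (I : Ideal (MvPolynomial (Fin s) K)) (d : ℕ) : ℕ :=
  Module.finrank K
    ((homogeneousSubmodule (Fin s) K d) ⧸
      (Submodule.comap (homogeneousSubmodule (Fin s) K d).subtype (I.restrictScalars K)))

/-- The Krull dimension of `S/I`, as a natural number. -/
noncomputable def krullDimQ (I : Ideal (MvPolynomial (Fin s) K)) : ℕ :=
  (((ringKrullDim (MvPolynomial (Fin s) K ⧸ I)).unbotD 0).untopD 0)

/-- The degree (multiplicity) of `S/I`: if `k = dim (S/I) ≥ 1`, it is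
`(k-1)! · lim_d H_I(d)/d^(k-1)`, and it is `dim_K (S/I)` if `k = 0`. -/
noncomputable def degQ (I : Ideal (MvPolynomial (Fin s) K)) : ℕ :=
  if krullDimQ K s I = 0 then Module.finrank K (MvPolynomial (Fin s) K ⧸ I)
  else Classical.epsilon (fun D : ℕ =>
    Tendsto (fun d : ℕ => (hilbertFn K s I d : ℝ) / (d : ℝ) ^ (krullDimQ K s I - 1)) atTop
      (nhds ((D : ℝ) / (Nat.factorial (krullDimQ K s I - 1)))))

/-- The regularity of the Hilbert function of `S/I`: the least `r ≥ 0` from which the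
Hilbert function agrees with a polynomial (necessarily the Hilbert polynomial). -/
noncomputable def regQ (I : Ideal (MvPolynomial (Fin s) K)) : ℕ :=
  sInf { r : ℕ | ∃ P : Polynomial ℚ, ∀ d : ℕ, r ≤ d → (hilbertFn K s I d : ℚ) = P.eval (d : ℚ) }

/-- The height of an ideal: the infimum of the heights of the primes containing it. -/
noncomputable def heightQ (I : Ideal (MvPolynomial (Fin s) K)) : ℕ∞ :=
  ⨅ p ∈ { p : PrimeSpectrum (MvPolynomial (Fin s) K) | I ≤ p.asIdeal }, Order.height p

/-- An ideal is a complete intersection if it can be generated by `ht(I)` elements. -/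
def IsCompleteIntersection (I : Ideal (MvPolynomial (Fin s) K)) : Prop :=
  ∃ (n : ℕ) (f : Fin n → MvPolynomial (Fin s) K),
    (n : ℕ∞) = heightQ K s I ∧ I = Ideal.span (Set.range f)

/-- An ideal is unmixed if all its associated primes have the same height. -/
def IsUnmixed (I : Ideal (MvPolynomial (Fin s) K)) : Prop :=
  ∀ p ∈ associatedPrimes (MvPolynomial (Fin s) K) (MvPolynomial (Fin s) K ⧸ I),
    ∀ q ∈ associatedPrimes (MvPolynomial (Fin s) K) (MvPolynomial (Fin s) K ⧸ I),
      heightQ K s p = heightQ K s q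

/-- A graded (homogeneous) ideal: it contains all homogeneous components of its elements. -/
def IsGradedIdeal (I : Ideal (MvPolynomial (Fin s) K)) : Prop :=
  ∀ f ∈ I, ∀ n : ℕ, homogeneousComponent n f ∈ I

variable {K s} in
/-- A graded monomial order: one refining the total degree. -/
def IsGradedOrder (m : MonomialOrder (Fin s)) : Prop :=
  ∀ a b : Fin s →₀ ℕ, a.degree < b.degree → m.toSyn a < m.toSyn b

variable {s} in
/-- The leading exponent (exponent of the leading monomial) of a polynomial with respect
to a monomial order.  (It is `0` by convention for the zero polynomial.) -/
noncomputable def lExp (m : MonomialOrder (Fin s)) (f : MvPolynomial (Fin s) K) :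
    Fin s →₀ ℕ :=
  m.toSyn.symm (f.support.sup (fun a => m.toSyn a))

variable {s} in
/-- The initial ideal of `I`: the ideal generated by the leading monomials of the nonzero
elements of `I`. -/
noncomputable def initIdeal (m : MonomialOrder (Fin s)) (I : Ideal (MvPolynomial (Fin s) K)) :
    Ideal (MvPolynomial (Fin s) K) :=
  Ideal.span { g | ∃ f ∈ I, f ≠ 0 ∧ g = monomial (lExp K m f) (1 : K) }

variable {s} in
/-- `f` is (or represents) a zero divisor of `S/I`. -/
def IsZeroDivOn (I : Ideal (MvPolynomial (Fin s) K)) (f : MvPolynomial (Fin s) K) : Prop :=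
  ∃ g, g ∉ I ∧ f * g ∈ I

variable {s} in
/-- The set `M_{≺,d}` of exponents of the standard monomials of degree `d` that are
zero divisors of `S/in_≺(I)`. -/
noncomputable def Mset (m : MonomialOrder (Fin s)) (I : Ideal (MvPolynomial (Fin s) K))
    (d : ℕ) : Set (Fin s →₀ ℕ) :=
  { a | a.degree = d ∧ monomial a (1 : K) ∉ initIdeal K m I ∧
      IsZeroDivOn K (initIdeal K m I) (monomial a (1 : K)) }

variable {s} in
/-- The set `F_{≺,d}` of nonzero zero divisors of `S/I` which are `K`-linear combinations
of standard monomials of degree `d`. -/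
noncomputable def Fset (m : MonomialOrder (Fin s)) (I : Ideal (MvPolynomial (Fin s) K))
    (d : ℕ) : Set (MvPolynomial (Fin s) K) :=
  { f | f ≠ 0 ∧ (∀ a ∈ f.support, a.degree = d ∧ monomial a (1 : K) ∉ initIdeal K m I) ∧
      IsZeroDivOn K I f }

variable {s} in
/-- The footprint function `fp_I`. -/
noncomputable def fp (m : MonomialOrder (Fin s)) (I : Ideal (MvPolynomial (Fin s) K))
    (d : ℕ) : ℤ :=
  if (Mset K m I d).Nonempty then
    (degQ K s I : ℤ) -
      sSup ((fun a => (degQ K s (initIdeal K m I ⊔ Ideal.span {monomial a (1 : K)}) : ℤ)) ''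
        Mset K m I d)
  else (degQ K s I : ℤ)

variable {s} in
/-- The minimum distance function `δ_I`. -/
noncomputable def delta (m : MonomialOrder (Fin s)) (I : Ideal (MvPolynomial (Fin s) K))
    (d : ℕ) : ℤ :=
  if (Fset K m I d).Nonempty then
    (degQ K s I : ℤ) -
      sSup ((fun f => (degQ K s (I ⊔ Ideal.span {f}) : ℤ)) '' Fset K m I d)
  else (degQ K s I : ℤ)

variable {s} in
/-- The vanishing ideal of a set of points of projective space: the ideal generated by
the homogeneous polynomials vanishing at (representatives of) all points of `X`. -/
noncomputable def vanishingIdeal (X : Set (Projectivization K (Fin s → K))) :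
    Ideal (MvPolynomial (Fin s) K) :=
  Ideal.span { f | (∃ n, f.IsHomogeneous n) ∧ ∀ p ∈ X, eval p.rep f = 0 }

variable {s} in
/-- The set of zeros in `X` of a (homogeneous) polynomial `f`. -/
def VX (X : Set (Projectivization K (Fin s → K))) (f : MvPolynomial (Fin s) K) :
    Set (Projectivization K (Fin s → K)) :=
  { p ∈ X | eval p.rep f = 0 }


/-!
Write `a` for the leading exponent of `f` (the paper's `t_1` is `X 0` here). As `in(I)` is
generated by the `t_i ^ d_i` with `i ≥ 2`, a monomial `t^b` is standard iff `b_i < d_i` for all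
`i ≥ 2`; in particular `a_i < d_i`. Since `f` is a zero divisor, `f g ∈ I` for some nonzero
standard `g`, so the leading exponent `a + lexp(g)` of `f g` is not standard, which forces
`a_i > 0` for some `i ≥ 2`; `r` is the least such `i`.

For the bound, work in a large degree `D`. Products of linear forms separate the points of `X`,
so the standard monomials of degree `D`, of which there are `∏ d_i`, span all functions on
`X`: `|X| ≤ ∏ d_i`. On the other hand the `∏ (d_i - a_i)` monomials `t^b` of degree `D` with
`a + b` standard are linearly independent as functions on `X \ V(f)`: if a combination `h` of
them vanishes there, then `f h` vanishes on `X`, so lies in `I`, although its leading exponent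
`a + lexp(h)` is standard. Hence `|X| - |V(f)| ≥ ∏ (d_i - a_i)`.
-/

section InitialIdeal

variable {K : Type*} [Field K] {s : ℕ} {m : MonomialOrder (Fin s)}

lemma lExp_eq_degree (f : MvPolynomial (Fin s) K) : lExp K m f = m.degree f := rfl

lemma monomial_degree_mem_initIdeal {I : Ideal (MvPolynomial (Fin s) K)}
    {f : MvPolynomial (Fin s) K} (hfI : f ∈ I) (hf0 : f ≠ 0) :
    monomial (m.degree f) (1 : K) ∈ initIdeal K m I :=
  Ideal.subset_span ⟨f, hfI, hf0, rfl⟩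

lemma monomial_mem_initIdeal_iff {I : Ideal (MvPolynomial (Fin s) K)} {b : Fin s →₀ ℕ} :
    monomial b (1 : K) ∈ initIdeal K m I ↔ ∃ f ∈ I, f ≠ 0 ∧ m.degree f ≤ b := by
  have : { g | ∃ f ∈ I, f ≠ 0 ∧ g = monomial (lExp K m f) (1 : K) } =
      (monomial · (1 : K)) '' (m.degree '' { f | f ∈ I ∧ f ≠ 0 }) := by
    ext
    simp [Set.image_image, eq_comm, lExp_eq_degree, and_assoc]
  rw [initIdeal, this, mem_ideal_span_monomial_image]
  simp [and_assoc]

lemma exists_sub_mem_forall_monomial_notMem_initIdeal (I : Ideal (MvPolynomial (Fin s) K))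
    (g : MvPolynomial (Fin s) K) :
    ∃ r, g - r ∈ I ∧ ∀ b ∈ r.support, monomial b (1 : K) ∉ initIdeal K m I := by
  obtain ⟨q, r, hgr, -, hr⟩ := m.div_set (B := { f | f ∈ I ∧ f ≠ 0 })
    (fun f hf => (m.leadingCoeff_ne_zero_iff.mpr hf.2).isUnit) g
  refine ⟨r, ?_, fun b hb hbI => ?_⟩
  · rw [hgr, add_sub_cancel_right]
    refine Submodule.span_le.mpr
      (Set.range_subset_iff.mpr fun (f : { f | f ∈ I ∧ f ≠ 0 }) => f.2.1) ?_
    rw [← Finsupp.range_linearCombination]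
    exact LinearMap.mem_range_self _ q
  · obtain ⟨f, hfI, hf0, hfb⟩ := monomial_mem_initIdeal_iff.mp hbI
    exact hr b hb f ⟨hfI, hf0⟩ hfb

lemma IsZeroDivOn.exists_degree_add_mem_initIdeal {I : Ideal (MvPolynomial (Fin s) K)}
    {f : MvPolynomial (Fin s) K} (hf : IsZeroDivOn K I f) (hf0 : f ≠ 0) :
    ∃ g : MvPolynomial (Fin s) K, g ≠ 0 ∧
      (∀ b ∈ g.support, monomial b (1 : K) ∉ initIdeal K m I) ∧
      monomial (m.degree f + m.degree g) (1 : K) ∈ initIdeal K m I := by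
  obtain ⟨g, hgI, hfg⟩ := hf
  obtain ⟨r, hgr, hr⟩ := exists_sub_mem_forall_monomial_notMem_initIdeal (m := m) I g
  have hr0 : r ≠ 0 := by
    rintro rfl
    exact hgI (by simpa using hgr)
  refine ⟨r, hr0, hr, ?_⟩
  rw [← m.degree_mul hf0 hr0]
  refine monomial_degree_mem_initIdeal ?_ (mul_ne_zero hf0 hr0)
  rw [show f * r = f * g - f * (g - r) by ring]
  exact I.sub_mem hfg (I.mul_mem_left f hgr)

end InitialIdeal

lemma isHomogeneous_of_forall_degree_eq {σ R : Type*} [CommSemiring R] {φ : MvPolynomial σ R}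
    {n : ℕ} (h : ∀ b ∈ φ.support, b.degree = n) : φ.IsHomogeneous n := by
  rw [← mem_homogeneousSubmodule, homogeneousSubmodule_eq_finsupp_supported]
  exact h

lemma finrank_restrictSupport {σ K : Type*} [Field K] (S : Finset (σ →₀ ℕ)) :
    Module.finrank K (restrictSupport K (S : Set (σ →₀ ℕ))) = S.card := by
  rw [Module.finrank_eq_card_basis (basisRestrictSupport K _)]
  simp

lemma monomial_mem_span_X_pow_iff {σ R : Type*} [CommSemiring R] [Nontrivial R] (P : σ → Prop)
    (d : σ → ℕ) (b : σ →₀ ℕ) :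
    monomial b (1 : R) ∈ Ideal.span { g | ∃ i, P i ∧ g = (X i : MvPolynomial σ R) ^ d i } ↔
      ∃ i, P i ∧ d i ≤ b i := by
  have : { g | ∃ i, P i ∧ g = (X i : MvPolynomial σ R) ^ d i } =
      (monomial · (1 : R)) '' ((fun i => Finsupp.single i (d i)) '' { i | P i }) := by
    ext
    simp [X_pow_eq_monomial, eq_comm]
  rw [this, mem_ideal_span_monomial_image]
  simp [support_monomial, Finsupp.single_le_iff]

section VanishingIdeal

variable {K : Type*} [Field K] {s : ℕ} {𝕏 : Set (Projectivization K (Fin s → K))}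

lemma eval_rep_eq_zero_of_mem_vanishingIdeal {f : MvPolynomial (Fin s) K}
    (hf : f ∈ vanishingIdeal K 𝕏) {p : Projectivization K (Fin s → K)} (hp : p ∈ 𝕏) :
    eval p.rep f = 0 := by
  induction hf using Submodule.span_induction with
  | mem x hx => exact hx.2 p hp
  | zero => simp
  | add x y _ _ hx hy => simp [hx, hy]
  | smul c x _ hx => simp [hx]

lemma mem_vanishingIdeal_of_isHomogeneous {f : MvPolynomial (Fin s) K} {n : ℕ}
    (hf : f.IsHomogeneous n) (h : ∀ p ∈ 𝕏, eval p.rep f = 0) : f ∈ vanishingIdeal K 𝕏 :=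
  Ideal.subset_span ⟨⟨n, hf⟩, h⟩

attribute [local instance] MvPolynomial.gradedAlgebra in
lemma vanishingIdeal_isHomogeneous :
    (vanishingIdeal K 𝕏).IsHomogeneous (homogeneousSubmodule (Fin s) K) :=
  Ideal.homogeneous_span _ _ (by rintro x ⟨⟨n, hn⟩, -⟩; exact ⟨n, hn⟩)

noncomputable def evalOn (Y : Set (Projectivization K (Fin s → K))) :
    MvPolynomial (Fin s) K →ₗ[K] Y → K :=
  LinearMap.pi fun q => (aeval (q : Projectivization K (Fin s → K)).rep).toLinearMap

@[simp]
lemma evalOn_apply (Y : Set (Projectivization K (Fin s → K))) (g : MvPolynomial (Fin s) K)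
    (q : Y) : evalOn Y g q = eval (q : Projectivization K (Fin s → K)).rep g := by
  simp [evalOn]

lemma evalOn_eq_of_sub_mem_vanishingIdeal {F G : MvPolynomial (Fin s) K}
    (h : F - G ∈ vanishingIdeal K 𝕏) : evalOn 𝕏 F = evalOn 𝕏 G :=
  funext fun q => by
    simpa [sub_eq_zero] using eval_rep_eq_zero_of_mem_vanishingIdeal h q.2

end VanishingIdeal

section Separators

variable {K : Type*} [Field K] {s : ℕ}

lemma exists_linear_form_separating {p q : Projectivization K (Fin s → K)} (hpq : p ≠ q) :
    ∃ L : MvPolynomial (Fin s) K,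
      L.IsHomogeneous 1 ∧ eval q.rep L = 0 ∧ eval p.rep L ≠ 0 := by
  have hp : p.rep ∉ K ∙ q.rep := by
    intro hmem
    obtain ⟨c, hc⟩ := Submodule.mem_span_singleton.mp hmem
    apply hpq
    simpa only [Projectivization.mk_rep] using
      (Projectivization.mk_eq_mk_iff' K _ _ p.rep_nonzero q.rep_nonzero).mpr ⟨c, hc⟩
  obtain ⟨φ, hφp, hφq⟩ := Submodule.exists_dual_map_eq_bot_of_notMem hp inferInstance
  have eval_eq (v : Fin s → K) :
      eval v (∑ i, C (φ fun j => if i = j then 1 else 0) * X i) = φ v := by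
    simp [φ.pi_apply_eq_sum_univ v, mul_comm]
  refine ⟨_, .sum _ _ _ fun i _ => isHomogeneous_C_mul_X _ i, ?_, by rwa [eval_eq]⟩
  rw [eval_eq]
  have := Submodule.mem_map_of_mem (f := φ) (Submodule.mem_span_singleton_self q.rep)
  rwa [hφq, Submodule.mem_bot] at this

lemma exists_isHomogeneous_separator (p : Projectivization K (Fin s → K))
    (Y : Finset (Projectivization K (Fin s → K))) (hpY : p ∉ Y) {D : ℕ} (hD : Y.card ≤ D) :
    ∃ F : MvPolynomial (Fin s) K, F.IsHomogeneous D ∧ eval p.rep F ≠ 0 ∧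
      ∀ q ∈ Y, eval q.rep F = 0 := by
  induction Y using Finset.induction_on generalizing D with
  | empty =>
    obtain ⟨i, hi⟩ := Function.ne_iff.mp p.rep_nonzero
    exact ⟨X i ^ D, isHomogeneous_X_pow i D, by simpa using pow_ne_zero D hi, by simp⟩
  | insert q Y hqY ih =>
    rw [Finset.card_insert_of_notMem hqY] at hD
    obtain ⟨F, hF, hFp, hFY⟩ :=
      ih (fun h => hpY (Finset.mem_insert_of_mem h)) (D := D - 1) (by omega)
    obtain ⟨L, hL, hLq, hLp⟩ := exists_linear_form_separating (p := p) (q := q)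
      (by rintro rfl; exact hpY (Finset.mem_insert_self p Y))
    refine ⟨L * F, ?_, by simp [hLp, hFp], fun q' hq' => ?_⟩
    · simpa [Nat.add_sub_cancel' (by omega : 1 ≤ D)] using hL.mul hF
    · rcases Finset.mem_insert.mp hq' with rfl | hq'
      · simp [hLq]
      · simp [hFY q' hq']

end Separators

section Counting

variable {K : Type*} [Field K] {s : ℕ}

attribute [local instance] MvPolynomial.gradedAlgebra

noncomputable def standardExps (m : MonomialOrder (Fin s)) (I : Ideal (MvPolynomial (Fin s) K))
    (D : ℕ) : Finset (Fin s →₀ ℕ) :=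
  {b ∈ Finset.univ.finsuppAntidiag D | monomial b (1 : K) ∉ initIdeal K m I}

lemma mem_standardExps {m : MonomialOrder (Fin s)} {I : Ideal (MvPolynomial (Fin s) K)} {D : ℕ}
    {b : Fin s →₀ ℕ} :
    b ∈ standardExps m I D ↔ b.degree = D ∧ monomial b (1 : K) ∉ initIdeal K m I := by
  simp [standardExps, Finsupp.degree_eq_sum]

lemma exists_mem_restrictSupport_standardExps_sub_mem (m : MonomialOrder (Fin s))
    {I : Ideal (MvPolynomial (Fin s) K)} (hI : I.IsHomogeneous (homogeneousSubmodule (Fin s) K))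
    {F : MvPolynomial (Fin s) K} {D : ℕ} (hF : F.IsHomogeneous D) :
    ∃ G ∈ restrictSupport K (standardExps m I D : Set (Fin s →₀ ℕ)), F - G ∈ I := by
  obtain ⟨r, hFr, hr⟩ := exists_sub_mem_forall_monomial_notMem_initIdeal (m := m) I F
  refine ⟨homogeneousComponent D r, (mem_restrictSupport_iff (R := K)).mpr fun b hb => ?_, ?_⟩
  · rw [Finset.mem_coe, support_homogeneousComponent, Finset.mem_filter] at hb
    exact mem_standardExps.mpr ⟨hb.2, hr b hb.1⟩
  · simpa [homogeneousComponent_eq_self hF] using homogeneousComponent_mem_of_mem hI hFr D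

variable {𝕏 : Set (Projectivization K (Fin s → K))}

theorem ncard_le_card_standardExps (m : MonomialOrder (Fin s)) (hfin : 𝕏.Finite) {D : ℕ}
    (hD : 𝕏.ncard ≤ D + 1) :
    𝕏.ncard ≤ (standardExps m (vanishingIdeal K 𝕏) D).card := by
  have : Fintype 𝕏 := hfin.fintype
  set V := restrictSupport K (standardExps m (vanishingIdeal K 𝕏) D : Set (Fin s →₀ ℕ))
  have : Module.Finite K V := .of_basis (basisRestrictSupport K _)
  have hsurj : Function.Surjective ((evalOn 𝕏).comp V.subtype) := by
    rw [← LinearMap.range_eq_top, eq_top_iff, ← (Pi.basisFun K 𝕏).span_eq, Submodule.span_le]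
    rintro _ ⟨p, rfl⟩
    obtain ⟨F, hF, hFp, hFq⟩ := exists_isHomogeneous_separator p.1 (hfin.toFinset.erase p)
      (by simp) (D := D)
      (by rw [Finset.card_erase_of_mem (by simp), ← Set.ncard_eq_toFinset_card 𝕏 hfin]; omega)
    obtain ⟨G, hG, hFG⟩ :=
      exists_mem_restrictSupport_standardExps_sub_mem m vanishingIdeal_isHomogeneous hF
    refine ⟨⟨(eval p.1.rep F)⁻¹ • G, V.smul_mem _ hG⟩, funext fun q => ?_⟩
    have hq := congrFun (evalOn_eq_of_sub_mem_vanishingIdeal hFG) q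
    rw [evalOn_apply, evalOn_apply] at hq
    by_cases hqp : q = p
    · subst hqp
      simp [← hq, hFp]
    · simp [← hq, hFq q.1 (by simpa using Subtype.coe_ne_coe.mpr hqp), hqp]
  calc 𝕏.ncard = Module.finrank K (𝕏 → K) := by
        rw [Module.finrank_fintype_fun_eq_card, ← Nat.card_eq_fintype_card, Nat.card_coe_set_eq]
    _ ≤ Module.finrank K V := LinearMap.finrank_le_finrank_of_surjective hsurj
    _ = _ := finrank_restrictSupport _

theorem card_le_ncard_diff_VX (m : MonomialOrder (Fin s)) (hfin : 𝕏.Finite)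
    {f : MvPolynomial (Fin s) K} {n : ℕ} (hf : f.IsHomogeneous n) (hf0 : f ≠ 0)
    {S : Finset (Fin s →₀ ℕ)} {D : ℕ}
    (hS : ∀ b ∈ S, b.degree = D ∧
      monomial (m.degree f + b) (1 : K) ∉ initIdeal K m (vanishingIdeal K 𝕏)) :
    S.card ≤ (𝕏 \ VX K 𝕏 f).ncard := by
  have : Fintype ↥(𝕏 \ VX K 𝕏 f) := hfin.sdiff.fintype
  set V := restrictSupport K (S : Set (Fin s →₀ ℕ))
  have hinj : Function.Injective ((evalOn (𝕏 \ VX K 𝕏 f)).comp V.subtype) := by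
    rw [← LinearMap.ker_eq_bot, LinearMap.ker_eq_bot']
    rintro ⟨h, hV⟩ hev
    by_contra hne
    have h0 : h ≠ 0 := fun h0 => hne (Subtype.ext h0)
    have hh : h.IsHomogeneous D := isHomogeneous_of_forall_degree_eq fun b hb => (hS b (hV hb)).1
    have hfh : f * h ∈ vanishingIdeal K 𝕏 := by
      refine mem_vanishingIdeal_of_isHomogeneous (hf.mul hh) fun p hp => ?_
      by_cases hpf : eval p.rep f = 0
      · simp [hpf]
      · simpa [hpf] using congrFun hev ⟨p, hp, fun h => hpf h.2⟩
    have := monomial_degree_mem_initIdeal (m := m) hfh (mul_ne_zero hf0 h0)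
    rw [m.degree_mul hf0 h0] at this
    exact (hS _ (hV (m.degree_mem_support h0))).2 this
  calc S.card = Module.finrank K V := (finrank_restrictSupport S).symm
    _ ≤ Module.finrank K (↥(𝕏 \ VX K 𝕏 f) → K) :=
        LinearMap.finrank_le_finrank_of_injective hinj
    _ = _ := by
      rw [Module.finrank_fintype_fun_eq_card, ← Nat.card_eq_fintype_card, Nat.card_coe_set_eq]

end Counting

section BoundedExponents

variable {σ : Type*} [Fintype σ] [DecidableEq σ]

noncomputable def boundedExps (i₀ : σ) (n : σ → ℕ) (D : ℕ) : Finset (σ →₀ ℕ) :=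
  {b ∈ Finset.univ.finsuppAntidiag D | ∀ i ≠ i₀, b i < n i}

lemma mem_boundedExps {i₀ : σ} {n : σ → ℕ} {D : ℕ} {b : σ →₀ ℕ} :
    b ∈ boundedExps i₀ n D ↔ b.degree = D ∧ ∀ i ≠ i₀, b i < n i := by
  simp [boundedExps, Finsupp.degree_eq_sum]

lemma mem_piFinset_ite_zero_range {i₀ : σ} {n : σ → ℕ} {c : σ → ℕ} :
    (c ∈ Fintype.piFinset fun i => if i = i₀ then {0} else Finset.range (n i)) ↔
      c i₀ = 0 ∧ ∀ i ≠ i₀, c i < n i := by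
  simp only [Fintype.mem_piFinset]
  refine ⟨fun h => ⟨by simpa using h i₀, fun i hi => by simpa [hi] using h i⟩,
    fun h i => ?_⟩
  by_cases hi : i = i₀ <;> simp [hi, h.1, h.2 i]

lemma card_piFinset_ite_zero_range (i₀ : σ) (n : σ → ℕ) :
    (Fintype.piFinset fun i => if i = i₀ then {0} else Finset.range (n i)).card =
      ∏ i ∈ Finset.univ.erase i₀, n i := by
  rw [Fintype.card_piFinset, ← Finset.mul_prod_erase _ _ (Finset.mem_univ i₀)]
  simp only [if_pos, Finset.card_singleton, one_mul]
  exact Finset.prod_congr rfl fun i hi => by simp [Finset.ne_of_mem_erase hi]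

/-- As `D` is large, an exponent in `boundedExps i₀ n D` is freely and uniquely determined by
its coordinates off `i₀`. -/
lemma card_boundedExps (i₀ : σ) (n : σ → ℕ) {D : ℕ}
    (hD : ∑ i ∈ Finset.univ.erase i₀, n i ≤ D) :
    (boundedExps i₀ n D).card = ∏ i ∈ Finset.univ.erase i₀, n i := by
  have split (g : σ → ℕ) : ∑ i, g i = g i₀ + ∑ i ∈ Finset.univ.erase i₀, g i :=
    (Finset.add_sum_erase _ _ (Finset.mem_univ i₀)).symm
  rw [← card_piFinset_ite_zero_range]
  refine Finset.card_nbij' (fun b => Function.update b i₀ 0)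
    (fun c => Finsupp.equivFunOnFinite.symm
      (Function.update c i₀ (D - ∑ i ∈ Finset.univ.erase i₀, c i))) ?_ ?_ ?_ ?_
  · intro b hb
    rw [Finset.mem_coe, mem_boundedExps] at hb
    exact mem_piFinset_ite_zero_range.mpr ⟨by simp, fun i hi => by simpa [hi] using hb.2 i hi⟩
  · intro c hc
    rw [Finset.mem_coe, mem_piFinset_ite_zero_range] at hc
    have hc_le : ∑ i ∈ Finset.univ.erase i₀, c i ≤ D :=
      (Finset.sum_le_sum fun i hi => (hc.2 i (Finset.ne_of_mem_erase hi)).le).trans hD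
    rw [Finset.mem_coe, mem_boundedExps, Finsupp.degree_eq_sum, split]
    refine ⟨?_, fun i hi => by simpa [hi] using hc.2 i hi⟩
    simp only [Finsupp.coe_equivFunOnFinite_symm, Function.update_self,
      Finset.sum_update_of_notMem (Finset.notMem_erase i₀ _)]
    omega
  · intro b hb
    rw [Finset.mem_coe, mem_boundedExps, Finsupp.degree_eq_sum, split] at hb
    ext i
    by_cases hi : i = i₀
    · subst hi
      simp only [Finsupp.coe_equivFunOnFinite_symm, Function.update_self,
        Finset.sum_update_of_notMem (Finset.notMem_erase i _)]
      omega
    · simp [hi]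
  · intro c hc
    rw [Finset.mem_coe, mem_piFinset_ite_zero_range] at hc
    ext i
    by_cases hi : i = i₀ <;> simp [hi, hc.1]

end BoundedExponents

section PurePowerInitialIdeal

variable {K : Type*} [Field K] {s : ℕ} {m : MonomialOrder (Fin s)} {d : Fin s → ℕ}

lemma IsZeroDivOn.exists_degree_pos {I : Ideal (MvPolynomial (Fin s) K)} {P : Fin s → Prop}
    (hinit : initIdeal K m I = Ideal.span { g | ∃ i, P i ∧ g = X i ^ d i })
    {f : MvPolynomial (Fin s) K} (hf : IsZeroDivOn K I f) (hf0 : f ≠ 0) :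
    ∃ i, P i ∧ 0 < m.degree f i := by
  obtain ⟨g, hg0, hg_std, hfg⟩ := hf.exists_degree_add_mem_initIdeal (m := m) hf0
  obtain ⟨i, hi, hle⟩ : ∃ i, P i ∧ d i ≤ m.degree f i + m.degree g i := by
    simpa [hinit, monomial_mem_span_X_pow_iff] using hfg
  have hg := hg_std _ (m.degree_mem_support hg0)
  simp only [hinit, monomial_mem_span_X_pow_iff, not_exists, not_and, not_le] at hg
  have := hg i hi
  exact ⟨i, hi, by omega⟩

variable {𝕏 : Set (Projectivization K (Fin s → K))} {i₀ : Fin s}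

theorem ncard_le_prod_of_initIdeal_eq (hfin : 𝕏.Finite)
    (hinit : initIdeal K m (vanishingIdeal K 𝕏) =
      Ideal.span { g | ∃ i, i ≠ i₀ ∧ g = X i ^ d i }) :
    𝕏.ncard ≤ ∏ i ∈ Finset.univ.erase i₀, d i := by
  set D := 𝕏.ncard + ∑ i ∈ Finset.univ.erase i₀, d i
  have hstd : standardExps m (vanishingIdeal K 𝕏) D = boundedExps i₀ d D := by
    ext b
    simp [mem_standardExps, mem_boundedExps, hinit, monomial_mem_span_X_pow_iff]
  rw [← card_boundedExps i₀ d (Nat.le_add_left _ _), ← hstd]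
  exact ncard_le_card_standardExps m hfin (by omega)

theorem prod_sub_degree_le_ncard_diff_VX (hfin : 𝕏.Finite)
    (hinit : initIdeal K m (vanishingIdeal K 𝕏) =
      Ideal.span { g | ∃ i, i ≠ i₀ ∧ g = X i ^ d i })
    {f : MvPolynomial (Fin s) K} {n : ℕ} (hf : f.IsHomogeneous n) (hf0 : f ≠ 0) :
    ∏ i ∈ Finset.univ.erase i₀, (d i - m.degree f i) ≤ (𝕏 \ VX K 𝕏 f).ncard := by
  rw [← card_boundedExps i₀ _ (Finset.sum_le_sum fun i _ => Nat.sub_le (d i) (m.degree f i))]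
  refine card_le_ncard_diff_VX (D := ∑ i ∈ Finset.univ.erase i₀, d i) m hfin hf hf0
    fun b hb => ?_
  rw [mem_boundedExps] at hb
  refine ⟨hb.1, ?_⟩
  simp only [hinit, monomial_mem_span_X_pow_iff, Finsupp.add_apply, not_exists, not_and, not_le]
  intro i hi
  have := hb.2 i hi
  omega

end PurePowerInitialIdeal

theorem card_zeros_le_of_initial_ci_general
    {K : Type*} [Field K] {s : ℕ}
    (𝕏 : Set (Projectivization K (Fin s → K))) (hfin : 𝕏.Finite)
    (m : MonomialOrder (Fin s))
    (d : Fin s → ℕ)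
    (hinit : initIdeal K m (vanishingIdeal K 𝕏) = Ideal.span
      { g | ∃ i : Fin s, (i : ℕ) ≠ 0 ∧ g = (X i : MvPolynomial (Fin s) K) ^ d i })
    (dd : ℕ) (f : MvPolynomial (Fin s) K)
    (hf : f ∈ Fset K m (vanishingIdeal K 𝕏) dd) :
    ∃ r : Fin s, (r : ℕ) ≠ 0 ∧ 1 ≤ lExp K m f r ∧
      (∀ i, r ≤ i → lExp K m f i ≤ d i - 1) ∧
      (∀ i : Fin s, (i : ℕ) ≠ 0 → i < r → lExp K m f i = 0) ∧
      (VX K 𝕏 f).ncard ≤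
        (∏ i ∈ Finset.univ.filter (fun i : Fin s => (i : ℕ) ≠ 0), d i) -
          ∏ i ∈ Finset.univ.filter (fun i : Fin s => (i : ℕ) ≠ 0), (d i - lExp K m f i) := by
  obtain ⟨hf0, hf_std, hf_zd⟩ := hf
  simp only [lExp_eq_degree]
  have ha : ∀ i : Fin s, (i : ℕ) ≠ 0 → m.degree f i < d i := by
    simpa [hinit, monomial_mem_span_X_pow_iff] using (hf_std _ (m.degree_mem_support hf0)).2
  obtain ⟨r, ⟨hr0, hr⟩, hmin⟩ := WellFounded.has_min wellFounded_lt
    {i : Fin s | (i : ℕ) ≠ 0 ∧ 0 < m.degree f i} (hf_zd.exists_degree_pos hinit hf0)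
  refine ⟨r, hr0, hr, fun i hri => ?_, fun i hi hir => ?_, ?_⟩
  · have := ha i (by rw [Fin.le_def] at hri; omega)
    omega
  · by_contra h
    exact hmin i ⟨hi, by omega⟩ hir
  have : NeZero s := NeZero.of_pos r.pos
  simp only [Fin.val_ne_zero_iff, Finset.filter_ne'] at hinit ⊢
  have hX := ncard_le_prod_of_initIdeal_eq hfin hinit
  have hW := prod_sub_degree_le_ncard_diff_VX hfin hinit
    (isHomogeneous_of_forall_degree_eq fun b hb => (hf_std b hb).1) hf0
  have hVX : VX K 𝕏 f ⊆ 𝕏 := fun p hp => hp.1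
  rw [Set.ncard_sdiff hVX (hfin.subset hVX)] at hW
  have := Set.ncard_le_ncard hVX hfin
  omega

/-- Bound on the number of zeros of a standard polynomial `f` in terms of
the exponents of its leading monomial, when `in_≺(I(𝕏)) = (t_2^{d_2}, …, t_s^{d_s})`. -/
theorem card_zeros_le_of_initial_ci
    {K : Type*} [Field K] {s : ℕ} (hs : 2 ≤ s)
    (𝕏 : Set (Projectivization K (Fin s → K))) (hfin : 𝕏.Finite)
    (m : MonomialOrder (Fin s)) (hm : IsGradedOrder m)
    (d : Fin s → ℕ)
    (hinit : initIdeal K m (vanishingIdeal K 𝕏) = Ideal.span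
      { g | ∃ i : Fin s, (i : ℕ) ≠ 0 ∧ g = (X i : MvPolynomial (Fin s) K) ^ d i })
    (dd : ℕ) (hdd : 1 ≤ dd) (f : MvPolynomial (Fin s) K)
    (hf : f ∈ Fset K m (vanishingIdeal K 𝕏) dd) :
    ∃ r : Fin s, (r : ℕ) ≠ 0 ∧ 1 ≤ lExp K m f r ∧
      (∀ i, r ≤ i → lExp K m f i ≤ d i - 1) ∧
      (∀ i : Fin s, (i : ℕ) ≠ 0 → i < r → lExp K m f i = 0) ∧
      (VX K 𝕏 f).ncard ≤
        (∏ i ∈ Finset.univ.filter (fun i : Fin s => (i : ℕ) ≠ 0), d i) -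
          ∏ i ∈ Finset.univ.filter (fun i : Fin s => (i : ℕ) ≠ 0), (d i - lExp K m f i) :=
  card_zeros_le_of_initial_ci_general 𝕏 hfin m d hinit dd f hf

end MDF
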